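/- arXiv:1506.05854 — 3 statements merged into one kernel-verified Lean document; each statement's English description precedes it below -/
import Mathlib

section
/- Let H be a group, N an abelian group, and ϖ : H × H → N a normalized 2-cocycle, with symmetry functions σ_H on H and σ_N on N (where σ_N additionally satisfies σ_N(n) = σ_N(n⁻¹)·n = n·σ_N(n⁻¹)). Define on G := H × N the central extension multiplication (h₁,n₁)(h₂,n₂) := (h₁h₂, n₁n₂ϖ(h₁,h₂)), and define σ(h,n) := (σ_H(h), σ_N(ϖ(σ_H(h⁻¹), h)·n)). Then σ is a symmetry function for G, i.e. σ((h,n)⁻¹)·(h,n) = σ(h,n) in G. -/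
/-!
The `H`-component of `σ((h,n)⁻¹)·(h,n)` is `σH(h⁻¹)·h = σH h`. For the `N`-component, the cocycle
identity at `(σH h⁻¹, h, h⁻¹)`, together with `σH h⁻¹ · h = σH h` and `ϖ(h, h⁻¹) = ϖ(h⁻¹, h)`,
shows that the argument `ϖ(σH h, h⁻¹) ϖ(h⁻¹, h)⁻¹ n⁻¹` of `σN` in `σ((h,n)⁻¹)` is the inverse of the
argument `m := ϖ(σH h⁻¹, h) n` of `σN` in `σ(h,n)`. The component is then `σN(m⁻¹)·m = σN m`.
-/

section Cocycle

variable {H N : Type*} [Group H] [Monoid N] {ϖ : H → H → N}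

theorem cocycle_mul_cocycle_mul_inv
    (hcoc : ∀ h₁ h₂ h₃ : H, ϖ h₁ h₂ * ϖ (h₁ * h₂) h₃ = ϖ h₂ h₃ * ϖ h₁ (h₂ * h₃))
    {a : H} (ha : ϖ a 1 = 1) (h : H) : ϖ a h * ϖ (a * h) h⁻¹ = ϖ h h⁻¹ := by
  rw [hcoc, mul_inv_cancel, ha, mul_one]

theorem cocycle_self_inv_eq_inv_self
    (hcoc : ∀ h₁ h₂ h₃ : H, ϖ h₁ h₂ * ϖ (h₁ * h₂) h₃ = ϖ h₂ h₃ * ϖ h₁ (h₂ * h₃))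
    {h : H} (hright : ϖ h 1 = 1) (hleft : ϖ 1 h = 1) : ϖ h h⁻¹ = ϖ h⁻¹ h := by
  simpa only [mul_inv_cancel, inv_mul_cancel, hright, hleft, mul_one] using hcoc h h⁻¹ h

end Cocycle

/-- Central extension `G = H × N` with multiplication
`(h₁,n₁)(h₂,n₂) = (h₁h₂, n₁n₂ ϖ(h₁,h₂))` and inverse
`(h,n)⁻¹ = (h⁻¹, ϖ(h⁻¹,h)⁻¹ n⁻¹)`. Given symmetry functions `σH` on `H` and `σN` on `N`,
the map `σ(h,n) := (σH h, σN (ϖ(σH h⁻¹, h) * n))` is a symmetry function for `G`: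
`σ((h,n)⁻¹) · (h,n) = σ(h,n)`. -/
theorem central_extension_symmetry {H N : Type*} [Group H] [CommGroup N]
    (ϖ : H → H → N)
    (hnorm : ∀ h : H, ϖ h 1 = 1 ∧ ϖ 1 h = 1)
    (hcoc : ∀ h₁ h₂ h₃ : H, ϖ h₁ h₂ * ϖ (h₁ * h₂) h₃ = ϖ h₂ h₃ * ϖ h₁ (h₂ * h₃))
    (σH : H → H) (hσH : ∀ h : H, σH h = σH h⁻¹ * h)
    (σN : N → N) (hσN : ∀ n : N, σN n = σN n⁻¹ * n)
    (mul : H × N → H × N → H × N)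
    (hmul : ∀ p q : H × N, mul p q = (p.1 * q.1, p.2 * q.2 * ϖ p.1 q.1))
    (inv : H × N → H × N)
    (hinv : ∀ p : H × N, inv p = (p.1⁻¹, (ϖ p.1⁻¹ p.1)⁻¹ * p.2⁻¹))
    (σ : H × N → H × N)
    (hσ : ∀ p : H × N, σ p = (σH p.1, σN (ϖ (σH p.1⁻¹) p.1 * p.2))) :
    ∀ p : H × N, mul (σ (inv p)) p = σ p := by
  rintro ⟨h, n⟩
  have hcancel : ϖ (σH h⁻¹) h * ϖ (σH h) h⁻¹ = ϖ h⁻¹ h := by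
    rw [hσH h, cocycle_mul_cocycle_mul_inv hcoc (hnorm _).1,
      cocycle_self_inv_eq_inv_self hcoc (hnorm h).1 (hnorm h).2]
  have harg : ϖ (σH h) h⁻¹ * ((ϖ h⁻¹ h)⁻¹ * n⁻¹) = (ϖ (σH h⁻¹) h * n)⁻¹ := by
    rw [← hcancel, mul_inv, mul_inv, mul_comm (ϖ (σH h⁻¹) h)⁻¹, mul_assoc, mul_inv_cancel_left]
  simp only [hinv, hσ, hmul, inv_inv]
  ext
  · exact (hσH h).symm
  · rw [harg, hσN (ϖ (σH h⁻¹) h * n), mul_assoc, mul_comm n]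
end

section
/- Let G be a unimodular locally compact group with Haar measure m and τ : G → G a measurable map such that cvᵗ(x,y) := (x·τ(y⁻¹x)⁻¹, y⁻¹x) is measurable. Then composition with cvᵗ defines a unitary operator CVᵗ on L²(G × G, m ⊗ m). -/
/-!
`cvᵗ` is the shear `(x, y) ↦ (x, y⁻¹x)` followed by `(u, v) ↦ (u τ(v)⁻¹, v)`. A σ-finite measure
that is both left and right invariant is also inversion invariant, so the first map, which is
inversion of `y` followed by right translation by `x`, preserves `μ ⊗ μ`; the second is a skew
product of right translations of the first factor. Hence `cvᵗ` is a measure-preserving measurable bijection, and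
composition with it is a surjective isometry of `L²`. Measurability of the group operations comes
from that of `(x, y) ↦ y⁻¹x`, the second coordinate of `cvᵗ`.
-/

open MeasureTheory Measure
open scoped ENNReal

namespace MeasureTheory.Lp

variable {α β E : Type*} [MeasurableSpace α] [MeasurableSpace β] {μ : Measure α} {ν : Measure β}
  [NormedAddCommGroup E] {p : ℝ≥0∞} [Fact (1 ≤ p)]
  (𝕜 : Type*) [NormedRing 𝕜] [Module 𝕜 E] [IsBoundedSMul 𝕜 E]

def compMeasurableEquivₗᵢ (e : α ≃ᵐ β) (he : MeasurePreserving e μ ν) :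
    Lp E p ν ≃ₗᵢ[𝕜] Lp E p μ where
  __ := compMeasurePreservingₗᵢ 𝕜 e he
  invFun := compMeasurePreserving e.symm (he.symm e)
  left_inv g := by
    change compMeasurePreserving e.symm _ (compMeasurePreserving e he g) = g
    rw [← compMeasurePreserving_comp_apply]
    simp only [e.self_comp_symm, compMeasurePreserving_id_apply]
  right_inv g := by
    change compMeasurePreserving e he (compMeasurePreserving e.symm _ g) = g
    rw [← compMeasurePreserving_comp_apply]
    simp only [e.symm_comp_self, compMeasurePreserving_id_apply]

theorem coeFn_compMeasurableEquivₗᵢ (e : α ≃ᵐ β) (he : MeasurePreserving e μ ν) (g : Lp E p ν) :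
    compMeasurableEquivₗᵢ 𝕜 e he g =ᵐ[μ] g ∘ e :=
  coeFn_compMeasurePreserving g he

end MeasureTheory.Lp

namespace MeasureTheory

variable {G : Type*} [Group G] [MeasurableSpace G]

theorem measurableInv_of_measurable_inv_mul (h : Measurable fun p : G × G => p.2⁻¹ * p.1) :
    MeasurableInv G :=
  ⟨by simpa [Function.comp_def] using
    h.comp (measurable_const.prodMk measurable_id : Measurable fun y : G => ((1 : G), y))⟩

theorem measurableMul₂_of_measurable_inv_mul (h : Measurable fun p : G × G => p.2⁻¹ * p.1) :
    MeasurableMul₂ G := by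
  have := measurableInv_of_measurable_inv_mul h
  exact ⟨by simpa [Function.comp_def] using h.comp (measurable_snd.prodMk measurable_fst.inv)⟩

variable [MeasurableMul₂ G]

theorem measurePreserving_mul_apply_prod (μ ν : Measure G) [SFinite μ] [SFinite ν]
    [IsMulRightInvariant μ] {f : G → G} (hf : Measurable f) :
    MeasurePreserving (fun z : G × G => (z.1 * f z.2, z.2)) (μ.prod ν) (μ.prod ν) :=
  measurePreserving_swap.comp <|
    ((MeasurePreserving.id ν).skew_product (g := fun y x => x * f y)
      (measurable_snd.mul (hf.comp measurable_fst))
      (.of_forall fun y => map_mul_right_eq_self μ (f y))).comp measurePreserving_swap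

variable [MeasurableInv G]

/-- `μ.inv` is left invariant, hence equal to `c • μ`, and inverting twice gives `c² = 1`. -/
theorem Measure.isInvInvariant_of_isMulRightInvariant (μ : Measure G) [NeZero μ]
    [IsMulLeftInvariant μ] [IsMulRightInvariant μ] [SigmaFinite μ] : μ.IsInvInvariant := by
  obtain ⟨s, hs0, hsfin⟩ : ∃ s, μ s ≠ 0 ∧ μ s ≠ ∞ := by
    obtain ⟨n, hn⟩ : ∃ n, μ (spanningSets μ n) ≠ 0 := by
      by_contra! h
      exact NeZero.ne μ (by simpa [iUnion_spanningSets] using measure_iUnion_null h)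
    exact ⟨_, hn, (measure_spanningSets_lt_top μ n).ne⟩
  set c := μ.inv s / μ s
  have hc : μ.inv = c • μ := measure_eq_div_smul μ.inv μ hs0 hsfin
  have hc2 : μ = c ^ 2 • μ := by
    conv_lhs => rw [← μ.inv_inv, hc]
    rw [Measure.inv, Measure.map_smul, ← Measure.inv, hc, smul_smul, sq]
  have hc1 : c = 1 := by
    have h := congrArg (· s) hc2
    simp only [Measure.smul_apply, smul_eq_mul] at h
    nth_rewrite 1 [← one_mul (μ s)] at h
    refine (ENNReal.pow_right_strictMono two_ne_zero).injective ?_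
    rw [one_pow, (ENNReal.mul_left_inj hs0 hsfin).1 h]
  exact ⟨by rw [hc, hc1, one_smul]⟩

section Shear

variable (μ ν : Measure G) [SFinite μ] [SFinite ν]

theorem measurePreserving_prod_inv_mul_right [IsMulRightInvariant ν] [IsInvInvariant ν] :
    MeasurePreserving (fun z : G × G => (z.1, z.2⁻¹ * z.1)) (μ.prod ν) (μ.prod ν) :=
  (measurePreserving_prod_mul_right μ ν).comp
    ((MeasurePreserving.id μ).prod (measurePreserving_inv ν))

def cvEquiv (τ : G → G) (hτ : Measurable τ) : G × G ≃ᵐ G × G where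
  toFun p := (p.1 * (τ (p.2⁻¹ * p.1))⁻¹, p.2⁻¹ * p.1)
  invFun p := (p.1 * τ p.2, p.1 * τ p.2 * p.2⁻¹)
  left_inv p := by ext <;> simp [mul_assoc]
  right_inv p := by ext <;> simp [mul_assoc]
  measurable_toFun := by simp only [Equiv.coe_fn_mk]; fun_prop
  measurable_invFun := by simp only [Equiv.coe_fn_symm_mk]; fun_prop

theorem measurePreserving_cvEquiv [IsMulRightInvariant μ] [IsMulRightInvariant ν]
    [IsInvInvariant ν] {τ : G → G} (hτ : Measurable τ) :
    MeasurePreserving (cvEquiv τ hτ) (μ.prod ν) (μ.prod ν) :=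
  (measurePreserving_mul_apply_prod μ ν hτ.inv).comp (measurePreserving_prod_inv_mul_right μ ν)

end Shear

end MeasureTheory

theorem cv_composition_unitary_general {G : Type*} [Group G] [TopologicalSpace G]
    [MeasurableSpace G]
    (μ : Measure G) [μ.IsHaarMeasure] [μ.IsMulRightInvariant] [SigmaFinite μ]
    (τ : G → G) (hτ : Measurable τ)
    (hcv : Measurable (fun p : G × G => (p.1 * (τ (p.2⁻¹ * p.1))⁻¹, p.2⁻¹ * p.1))) :
    ∃ U : Lp ℂ 2 (μ.prod μ) ≃ₗᵢ[ℂ] Lp ℂ 2 (μ.prod μ),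
      ∀ F : Lp ℂ 2 (μ.prod μ),
        (U F : G × G → ℂ) =ᵐ[μ.prod μ]
          fun p : G × G => F (p.1 * (τ (p.2⁻¹ * p.1))⁻¹, p.2⁻¹ * p.1) := by
  have hshear : Measurable fun p : G × G => p.2⁻¹ * p.1 := measurable_snd.comp hcv
  have := measurableInv_of_measurable_inv_mul hshear
  have := measurableMul₂_of_measurable_inv_mul hshear
  have := μ.isInvInvariant_of_isMulRightInvariant
  have hcvμ := measurePreserving_cvEquiv μ μ hτ
  exact ⟨Lp.compMeasurableEquivₗᵢ ℂ _ hcvμ, Lp.coeFn_compMeasurableEquivₗᵢ ℂ _ hcvμ⟩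

/-- On a unimodular locally compact group `G` with Haar measure `μ` (left and right
invariant), for a measurable `τ : G → G` such that
`cvᵗ(x,y) := (x·τ(y⁻¹x)⁻¹, y⁻¹x)` is measurable, composition with `cvᵗ` defines a
unitary operator on `L²(G×G, μ ⊗ μ)`. -/
theorem cv_composition_unitary {G : Type*} [Group G] [TopologicalSpace G]
    [IsTopologicalGroup G] [LocallyCompactSpace G] [MeasurableSpace G] [BorelSpace G]
    (μ : Measure G) [μ.IsHaarMeasure] [μ.IsMulRightInvariant] [SigmaFinite μ]
    (τ : G → G) (hτ : Measurable τ)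
    (hcv : Measurable (fun p : G × G => (p.1 * (τ (p.2⁻¹ * p.1))⁻¹, p.2⁻¹ * p.1))) :
    ∃ U : Lp ℂ 2 (μ.prod μ) ≃ₗᵢ[ℂ] Lp ℂ 2 (μ.prod μ),
      ∀ F : Lp ℂ 2 (μ.prod μ),
        (U F : G × G → ℂ) =ᵐ[μ.prod μ]
          fun p : G × G => F (p.1 * (τ (p.2⁻¹ * p.1))⁻¹, p.2⁻¹ * p.1) :=
  cv_composition_unitary_general μ τ hτ hcv
end

section
/- Let G be a noncompact locally compact group, and for f ∈ L¹(G) let Conv_L(f) be the left-convolution operator on L²(G), which commutes with all right translations R(x), where R(x) is unitary and R(x) → 0 weakly as x → ∞. If Conv_L(f) is a compact operator, then Conv_L(f) = 0. -/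
/-!
`C` maps the bounded, weakly null net `x ↦ R x u` into a compact set. Continuous linear forms
tend to `0` along `C (R x u)` and separate points, so `0` is its only cluster point there, and
`C (R x u) → 0` in norm. But `‖C (R x u)‖ = ‖R x (C u)‖ = ‖C u‖` does not depend on `x`,
hence `C u = 0`.
-/

open Filter Topology Set

theorem SeparatingDual.eq_zero_of_mapClusterPt_of_weakly_tendsto_zero {𝕜 F ι : Type*}
    [NontriviallyNormedField 𝕜] [AddCommGroup F] [TopologicalSpace F] [Module 𝕜 F]
    [SeparatingDual 𝕜 F] {l : Filter ι} {w : ι → F} {y : F} (hy : MapClusterPt y l w)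
    (hw : ∀ φ : StrongDual 𝕜 F, Tendsto (fun i => φ (w i)) l (𝓝 0)) : y = 0 :=
  SeparatingDual.eq_zero_of_forall_dual_eq_zero (R := 𝕜) fun φ =>
    eq_of_nhds_neBot (ClusterPt.mono (hy.continuousAt_comp φ.continuous.continuousAt) (hw φ)).neBot

theorem IsCompactOperator.tendsto_zero_of_weakly_tendsto_zero {𝕜 E F ι : Type*}
    [NontriviallyNormedField 𝕜] [AddCommGroup E] [TopologicalSpace E] [Module 𝕜 E]
    [AddCommGroup F] [TopologicalSpace F] [Module 𝕜 F] [ContinuousConstSMul 𝕜 F]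
    [SeparatingDual 𝕜 F] {T : E →L[𝕜] F} (hT : IsCompactOperator T) {l : Filter ι} {v : ι → E}
    (hbdd : Bornology.IsVonNBounded 𝕜 (range v))
    (hv : ∀ φ : StrongDual 𝕜 E, Tendsto (fun i => φ (v i)) l (𝓝 0)) :
    Tendsto (fun i => T (v i)) l (𝓝 0) := by
  obtain ⟨K, hK, hTK⟩ := hT.image_subset_compact_of_isVonNBounded (f := (T : E →ₗ[𝕜] F)) hbdd
  refine hK.tendsto_nhds_of_unique_mapClusterPt
    (Eventually.of_forall fun i => hTK (mem_image_of_mem _ (mem_range_self i))) fun y _ hy => ?_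
  exact SeparatingDual.eq_zero_of_mapClusterPt_of_weakly_tendsto_zero hy fun φ => hv (φ.comp T)

theorem InnerProductSpace.tendsto_dual_apply_of_tendsto_inner {𝕜 H ι : Type*} [RCLike 𝕜]
    [NormedAddCommGroup H] [InnerProductSpace 𝕜 H] [CompleteSpace H] {l : Filter ι} {v : ι → H}
    (hv : ∀ w : H, Tendsto (fun i => (inner 𝕜 w (v i) : 𝕜)) l (𝓝 0)) (φ : StrongDual 𝕜 H) :
    Tendsto (fun i => φ (v i)) l (𝓝 0) := by
  simpa only [toDual_symm_apply] using hv ((toDual 𝕜 H).symm φ)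

/-- Abstract form of: on a noncompact group, a compact left-convolution operator is zero.
`C` is a compact operator on a Hilbert space `H`, commuting with a family of isometric
(unitary) operators `R x`, `x ∈ G`, which tend weakly to `0` as `x → ∞` (along the
cocompact filter of the noncompact group `G`). Then `C = 0`. -/
theorem compact_convolution_zero {G : Type*} [Group G] [TopologicalSpace G]
    [NoncompactSpace G]
    {H : Type*} [NormedAddCommGroup H] [InnerProductSpace ℂ H] [CompleteSpace H]
    (C : H →L[ℂ] H) (hC : IsCompactOperator C)
    (R : G → H →L[ℂ] H)
    (hRiso : ∀ (x : G) (u : H), ‖R x u‖ = ‖u‖)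
    (hcomm : ∀ x : G, C.comp (R x) = (R x).comp C)
    (hweak : ∀ u v : H,
      Tendsto (fun x : G => (inner ℂ v (R x u) : ℂ)) (cocompact G) (nhds 0)) :
    C = 0 := by
  ext u
  have hbdd : Bornology.IsVonNBounded ℂ (range fun x => R x u) := by
    refine (NormedSpace.isVonNBounded_iff ℂ).mpr (isBounded_iff_forall_norm_le.mpr ⟨‖u‖, ?_⟩)
    rintro _ ⟨x, rfl⟩
    exact (hRiso x u).le
  have hlim := (hC.tendsto_zero_of_weakly_tendsto_zero hbdd
    (InnerProductSpace.tendsto_dual_apply_of_tendsto_inner (hweak u))).norm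
  have hconst : ∀ x, ‖C (R x u)‖ = ‖C u‖ := fun x => by
    rw [← ContinuousLinearMap.comp_apply, hcomm, ContinuousLinearMap.comp_apply, hRiso]
  simp only [hconst, norm_zero] at hlim
  have := cocompact_neBot_iff.mpr ‹NoncompactSpace G›
  simpa using tendsto_const_nhds_iff.mp hlim
end
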